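/- arXiv:2009.11750 — 6 statements merged into one kernel-verified Lean document; each statement's English description precedes it below -/
import Mathlib

section
/- Let q be a power of a prime p, let L be a field that is an F_q-algebra, let n ≥ 1 be an integer, and let α ∈ L be such that α^{q^n} + c ≠ 0 for every c ∈ F_q (this also forces α + c ≠ 0 for every c ∈ F_q). Then ∑_{c ∈ F_q} (c + α)^{1 − q^n} = (α^{q^n} − α) / ∏_{c ∈ F_q} (c + α^{q^n}). -/
/-!
Since `c ∈ F_q` is fixed by `x ↦ x^q`, Frobenius gives `(c + α)^{q^n} = c + β` with
`β = α^{q^n}`, so each summand is `(c + α) / (c + β) = 1 + (α - β) / (c + β)`. The constants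
add up to `q = 0`, and `∑_c 1 / (c + β)` is the logarithmic derivative of
`∏_c (X + c) = X^q - X` at `β`, i.e. `-1 / ∏_c (c + β)` because the derivative is `-1`.
-/

open Polynomial Finset

theorem Polynomial.sum_inv_add_eq_eval_derivative_div {K ι : Type*} [Field K] [DecidableEq ι]
    (s : Finset ι) (a : ι → K) {x : K} (hx : ∀ i ∈ s, a i + x ≠ 0) :
    ∑ i ∈ s, (a i + x)⁻¹ =
      (derivative (∏ i ∈ s, (C (a i) + X))).eval x / ∏ i ∈ s, (a i + x) := by
  have hprod : ∏ i ∈ s, (a i + x) ≠ 0 := prod_ne_zero_iff.2 hx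
  rw [derivative_prod_finset, eval_finsetSum, sum_div]
  refine sum_congr rfl fun i hi => ?_
  rw [eq_div_iff hprod, ← mul_prod_erase s _ hi]
  simp [eval_prod, inv_mul_cancel_left₀ (hx i hi)]

namespace FiniteField

variable (K R : Type*) [Field K] [Fintype K] [CommRing R] [Algebra K R]

theorem natCast_card_eq_zero_of_algebra : (Fintype.card K : R) = 0 := by
  rw [← map_natCast (algebraMap K R), Nat.cast_card_eq_zero, map_zero]

theorem prod_C_algebraMap_add_X :
    ∏ c : K, (C (algebraMap K R c) + X) = X ^ Fintype.card K - X := by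
  have hK : ∏ c : K, (X - C c) = (X ^ Fintype.card K - X : K[X]) := by
    have hmonic : (X ^ Fintype.card K - X : K[X]).Monic :=
      monic_X_pow_sub (by rw [degree_X]; exact_mod_cast Fintype.one_lt_card)
    have h := prod_multiset_X_sub_C_of_monic_of_roots_card_eq hmonic (by
      rw [roots_X_pow_card_sub_X, X_pow_card_sub_X_natDegree_eq K Fintype.one_lt_card]
      rfl)
    rwa [roots_X_pow_card_sub_X] at h
  calc ∏ c : K, (C (algebraMap K R c) + X) = ∏ c : K, (X - C (algebraMap K R c)) :=
        Fintype.prod_equiv (Equiv.neg K) _ _ fun c => by simp [sub_eq_add_neg, add_comm]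
    _ = (∏ c : K, (X - C c)).map (algebraMap K R) := by simp [Polynomial.map_prod]
    _ = X ^ Fintype.card K - X := by simp [hK]

theorem algebraMap_add_pow_card_pow (c : K) (x : R) (n : ℕ) :
    (algebraMap K R c + x) ^ Fintype.card K ^ n = algebraMap K R c + x ^ Fintype.card K ^ n := by
  induction n with
  | zero => simp
  | succ n ih =>
    rw [pow_succ, pow_mul, pow_mul, ih]
    have h := map_add (frobeniusAlgHom K R) (algebraMap K R c) (x ^ Fintype.card K ^ n)
    rwa [AlgHom.commutes] at h

theorem sum_inv_algebraMap_add {L : Type*} [Field L] [Algebra K L] {x : L}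
    (hx : ∀ c : K, algebraMap K L c + x ≠ 0) :
    ∑ c : K, (algebraMap K L c + x)⁻¹ = -(∏ c : K, (algebraMap K L c + x))⁻¹ := by
  classical
  rw [sum_inv_add_eq_eval_derivative_div _ _ fun c _ => hx c, prod_C_algebraMap_add_X]
  simp [derivative_X_pow, natCast_card_eq_zero_of_algebra, neg_div]

end FiniteField

open FiniteField

theorem stmt0_general (Fq L : Type*) [Field Fq] [Fintype Fq] [Field L] [Algebra Fq L]
    (q : ℕ) (hq : q = Fintype.card Fq)
    (n : ℕ) (α : L)
    (hα : ∀ c : Fq, α ^ q ^ n + algebraMap Fq L c ≠ 0) :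
    ∑ c : Fq, (algebraMap Fq L c + α) ^ (1 - (q : ℤ) ^ n) =
      (α ^ q ^ n - α) / ∏ c : Fq, (algebraMap Fq L c + α ^ q ^ n) := by
  subst hq
  generalize hβ_def : α ^ Fintype.card Fq ^ n = β at hα ⊢
  have hβ (c : Fq) : algebraMap Fq L c + β ≠ 0 := by rw [add_comm]; exact hα c
  have hterm (c : Fq) :
      (algebraMap Fq L c + α) ^ (1 - (Fintype.card Fq : ℤ) ^ n) =
        1 + (α - β) * (algebraMap Fq L c + β)⁻¹ := by
    have hfrob : (algebraMap Fq L c + α) ^ Fintype.card Fq ^ n = algebraMap Fq L c + β :=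
      hβ_def ▸ algebraMap_add_pow_card_pow Fq L c α n
    have hα' : algebraMap Fq L c + α ≠ 0 :=
      ne_zero_pow (pow_ne_zero n Fintype.card_ne_zero) (hfrob ▸ hβ c)
    have hβc := hβ c
    rw [zpow_sub₀ hα', zpow_one, ← Nat.cast_pow, zpow_natCast, hfrob]
    field_simp
    ring
  rw [sum_congr rfl fun c _ => hterm c, sum_add_distrib, ← mul_sum, sum_inv_algebraMap_add Fq hβ]
  simp only [sum_const, card_univ, nsmul_eq_mul, mul_one, natCast_card_eq_zero_of_algebra, zero_add]
  ring

/-- **Lemma 5.3(1), algebraic identity.**  Let `q` be a power of a prime (realized as the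
cardinality of a finite field `Fq`), `L` a field which is an `Fq`-algebra, `n ≥ 1`, and
`α ∈ L` with `α^{q^n} + c ≠ 0` for all `c ∈ Fq`.  Then
`∑_{c ∈ Fq} (c + α)^{1 - q^n} = (α^{q^n} - α) / ∏_{c ∈ Fq} (c + α^{q^n})`. -/
theorem stmt0 (Fq L : Type*) [Field Fq] [Fintype Fq] [Field L] [Algebra Fq L]
    (q : ℕ) (hq : q = Fintype.card Fq)
    (n : ℕ) (hn : 1 ≤ n) (α : L)
    (hα : ∀ c : Fq, α ^ q ^ n + algebraMap Fq L c ≠ 0) :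
    ∑ c : Fq, (algebraMap Fq L c + α) ^ (1 - (q : ℤ) ^ n) =
      (α ^ q ^ n - α) / ∏ c : Fq, (algebraMap Fq L c + α ^ q ^ n) :=
  stmt0_general Fq L q hq n α hα
end

section
/- Let q be a power of a prime p, let L be a field that is an F_q-algebra carrying a multiplicative nonarchimedean absolute value |·| : L → ℝ (i.e. |xy| = |x||y|, |x| = 0 iff x = 0, and |x + y| ≤ max(|x|, |y|)), let n ≥ 1 be an integer, and let α ∈ L with |α| > 1. Then |∑_{c ∈ F_q} (c + α)^{1 − q^n}| = |α|^{q^n (1 − q)}. -/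
open Polynomial Finset

/-- **Lemma 5.3(1), absolute-value statement.**  Let `q` be a power of a prime (realized as the
cardinality of a finite field `Fq`), `L` a field which is an `Fq`-algebra equipped with a
multiplicative nonarchimedean absolute value `v`, `n ≥ 1`, and `α ∈ L` with `|α| > 1`.  Then
`|∑_{c ∈ Fq} (c + α)^{1 - q^n}| = |α|^{q^n (1 - q)}`. -/
theorem stmt1 (Fq L : Type*) [Field Fq] [Fintype Fq] [Field L] [Algebra Fq L]
    (q : ℕ) (hq : q = Fintype.card Fq)
    (v : AbsoluteValue L ℝ) (hv : IsNonarchimedean v)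
    (n : ℕ) (hn : 1 ≤ n) (α : L) (hα : 1 < v α) :
    v (∑ c : Fq, (algebraMap Fq L c + α) ^ (1 - (q : ℤ) ^ n)) =
      v α ^ ((q : ℤ) ^ n * (1 - (q : ℤ))) := by
  classical
  set φ := algebraMap Fq L with hφ
  have hq2 : 2 ≤ q := by rw [hq]; exact Fintype.one_lt_card
  -- characteristic
  obtain ⟨p, hpc⟩ := CharP.exists Fq
  obtain ⟨k, hp, hcard⟩ := FiniteField.card Fq p
  haveI : Fact p.Prime := ⟨hp⟩
  haveI : CharP L p := charP_of_injective_algebraMap (algebraMap Fq L).injective p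
  have hqL : (q : L) = 0 := by
    rw [hq, hcard]
    push_cast
    rw [CharP.cast_eq_zero L p, zero_pow (by positivity)]
  -- nonarchimedean key lemma
  have key : ∀ x y : L, v x < v y → v (x + y) = v y := by
    intro x y h
    refine le_antisymm ((hv x y).trans (by rw [max_eq_right h.le])) ?_
    by_contra hlt
    push_neg at hlt
    have h2 := hv (x + y) (-x)
    rw [show x + y + -x = y from by ring, v.map_neg] at h2
    exact absurd h2 (not_le.mpr (max_lt hlt h))
  -- elements of Fq are small
  have small : ∀ c : Fq, v (φ c) ≤ 1 := by
    intro c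
    rcases eq_or_ne c 0 with rfl | hc
    · simp
    have hpow : (φ c) ^ q = φ c := by
      rw [← map_pow, hq, FiniteField.pow_card]
    by_contra ht
    push_neg at ht
    have : v (φ c) < v (φ c) ^ q := by
      nth_rewrite 1 [← pow_one (v (φ c))]
      exact pow_lt_pow_right₀ ht (by omega)
    rw [← v.map_pow, hpow] at this
    exact lt_irrefl _ this
  set β : L := α ^ q ^ n with hβ
  have hqn1 : 1 < q ^ n := by
    calc 1 < q := by omega
    _ ≤ q ^ n := Nat.le_self_pow (by omega) q
  have hvβ : v β = v α ^ q ^ n := by rw [hβ, v.map_pow]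
  have hαβ : v α < v β := by
    rw [hvβ]; nth_rewrite 1 [← pow_one (v α)]
    exact pow_lt_pow_right₀ hα hqn1
  have h1β : (1 : ℝ) < v β := lt_trans hα hαβ
  have hvα0 : v α ≠ 0 := by positivity
  -- key value computations
  have hvadd : ∀ c : Fq, v (φ c + α) = v α := fun c =>
    key _ _ (lt_of_le_of_lt (small c) hα)
  have hvsubβ : ∀ c : Fq, v (β - φ c) = v β := by
    intro c
    rw [sub_eq_neg_add]
    exact key _ _ (by rw [v.map_neg]; exact lt_of_le_of_lt (small c) h1β)
  have hsubβne : ∀ c : Fq, β - φ c ≠ 0 := by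
    intro c h
    have := hvsubβ c
    rw [h, v.map_zero] at this
    exact absurd this.symm (by positivity)
  have haddne : ∀ c : Fq, φ c + α ≠ 0 := by
    intro c h
    have := hvadd c
    rw [h, v.map_zero] at this
    exact hvα0 this.symm
  -- Frobenius
  have hfr : ∀ c : Fq, (φ c + α) ^ q ^ n = φ c + β := by
    intro c
    have hqpk : q ^ n = p ^ (k * n) := by rw [hq, hcard, ← pow_mul]
    have hc : c ^ q ^ n = c := by rw [hq]; exact FiniteField.pow_card_pow n c
    calc (φ c + α) ^ q ^ n = φ c ^ q ^ n + α ^ q ^ n := by rw [hqpk, add_pow_char_pow]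
    _ = φ c + β := by rw [← map_pow, hc, hβ]
  -- zpow rewriting
  have hzpow : ∀ c : Fq, (φ c + α) ^ (1 - (q : ℤ) ^ n) = (φ c + α) / (φ c + β) := by
    intro c
    rw [show ((q : ℤ) ^ n) = ((q ^ n : ℕ) : ℤ) by push_cast; ring,
      zpow_sub₀ (haddne c), zpow_one, zpow_natCast, hfr c]
  -- polynomial identity ∏ (X - C c) = X^q - X over Fq
  have hmonic : (X ^ q - X : Fq[X]).Monic := by
    apply monic_X_pow_sub
    rw [degree_X]
    exact_mod_cast by omega
  have hP : ∏ c : Fq, ((X : Fq[X]) - C c) = X ^ q - X := by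
    have hroots : (X ^ q - X : Fq[X]).roots = Finset.univ.val := by
      rw [hq]; exact FiniteField.roots_X_pow_card_sub_X Fq
    have hdeg : (X ^ q - X : Fq[X]).natDegree = q :=
      FiniteField.X_pow_card_sub_X_natDegree_eq Fq (by omega)
    have h2 := prod_multiset_X_sub_C_of_monic_of_roots_card_eq hmonic
      (by rw [hroots, hdeg]; simp [hq])
    rw [hroots] at h2
    rw [Finset.prod_eq_multiset_prod]
    exact h2
  -- derivative identity
  have hder : ∑ c : Fq, ∏ c' ∈ univ.erase c, ((X : Fq[X]) - C c') = (-1 : Fq[X]) := by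
    have h1 := derivative_prod (s := (univ : Finset Fq).val) (f := fun c => (X : Fq[X]) - C c)
    simp only [derivative_sub, derivative_X, derivative_C, sub_zero, mul_one,
      ← Finset.erase_val, ← Finset.prod_eq_multiset_prod, ← Finset.sum_eq_multiset_sum] at h1
    rw [hP, derivative_sub,
      derivative_X_pow, derivative_X, hq, Nat.cast_card_eq_zero, C_0,
      zero_mul, zero_sub] at h1
    exact h1.symm
  -- evaluate at β
  have hprodL : ∏ c : Fq, (β - φ c) = β ^ q - β := by
    have h2 := congrArg (aeval β) hP
    simp only [map_prod, map_sub, map_pow, aeval_X, aeval_C] at h2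
    rw [hφ]
    exact h2
  have hderL : ∑ c : Fq, ∏ c' ∈ univ.erase c, (β - φ c') = (-1 : L) := by
    have h2 := congrArg (aeval β) hder
    simp only [map_sum, map_prod, map_sub, aeval_X, aeval_C, map_neg, map_one] at h2
    rw [hφ]
    exact h2
  have hDne : β ^ q - β ≠ 0 := by
    rw [← hprodL]
    exact Finset.prod_ne_zero_iff.mpr fun c _ => hsubβne c
  -- main algebraic identity
  have hmain : (∑ c : Fq, (α - φ c) / (β - φ c)) * (β ^ q - β) = β - α := by
    nth_rewrite 1 [← hprodL]
    rw [Finset.sum_mul]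
    have hterm : ∀ c : Fq, (α - φ c) / (β - φ c) * ∏ c' : Fq, (β - φ c') =
        (α - β) * ∏ c' ∈ univ.erase c, (β - φ c') + ∏ c' : Fq, (β - φ c') := by
      intro c
      rw [← Finset.mul_prod_erase univ _ (mem_univ c), div_mul_eq_mul_div,
        mul_comm (β - φ c) (∏ c' ∈ univ.erase c, (β - φ c')), ← mul_assoc, mul_div_assoc,
        div_self (hsubβne c), mul_one]
      ring
    rw [Finset.sum_congr rfl fun c _ => hterm c, Finset.sum_add_distrib, ← Finset.mul_sum,
      hderL, Finset.sum_const, Finset.card_univ, ← hq, nsmul_eq_mul, hqL, zero_mul, add_zero]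
    ring
  -- reindex c ↦ -c
  have hre : ∑ c : Fq, (φ c + α) / (φ c + β) = ∑ c : Fq, (α - φ c) / (β - φ c) := by
    apply Fintype.sum_equiv (Equiv.neg Fq)
    intro c
    rw [Equiv.neg_apply, map_neg]
    ring
  have hS : (∑ c : Fq, (φ c + α) ^ (1 - (q : ℤ) ^ n)) = (β - α) / (β ^ q - β) := by
    rw [Finset.sum_congr rfl fun c _ => hzpow c, hre, eq_div_iff hDne]
    exact hmain
  -- absolute values
  have h1 : v (β - α) = v α ^ q ^ n := by
    rw [sub_eq_neg_add, key (-α) β (by rw [v.map_neg]; exact hαβ)]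
    exact hvβ
  have hlt : v (-β) < v (β ^ q) := by
    rw [v.map_neg, v.map_pow β q]
    nth_rewrite 1 [← pow_one (v β)]
    exact pow_lt_pow_right₀ h1β (by omega)
  have h2 : v (β ^ q - β) = v α ^ (q ^ n * q) := by
    rw [sub_eq_neg_add, key _ _ hlt, v.map_pow, hvβ, ← pow_mul]
  rw [hS, map_div₀, h1, h2,
    show (q : ℤ) ^ n * (1 - q) = ((q ^ n : ℕ) : ℤ) - ((q ^ n * q : ℕ) : ℤ) by push_cast; ring,
    zpow_sub₀ hvα0, zpow_natCast, zpow_natCast]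
end

section
/- Let q be a power of a prime p and let C be a field that is an F_q-algebra, carrying a multiplicative nonarchimedean absolute value |·| with respect to which C is complete. Let α : ℕ → C satisfy α_0 = 1, |α_i| < |α_{i+1}| for all i, and |α_i| → ∞ (so in particular |α_1| > 1). Then for every integer n ≥ 1, the sum ẑ(q^n − 1) := ∑_{i ≥ 1} ∑_{(c_0, …, c_{i−1}) ∈ F_q^i} (c_0α_0 + c_1α_1 + ⋯ + c_{i−1}α_{i−1} + α_i)^{1 − q^n} satisfies |ẑ(q^n − 1)| = |α_1|^{q^n (1 − q)}, and in particular |ẑ(q^n − 1)| < 1. -/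
/-!
Group the terms of the sum by `(i, c₁, …, c_{i-1})` and sum over `c₀` first. With
`y = c₁α₁ + ⋯ + c_{i-1}α_{i-1} + α_i` and `Y = y^{qⁿ}`, Frobenius gives `(y - c)^{qⁿ} = Y - c`, and
the logarithmic derivative of `X^q - X = ∏_c (X - c)` gives `∑_c (Y - c)⁻¹ = -(Y^q - Y)⁻¹`;
hence `∑_c (y - c)^{1-qⁿ} = (Y - y)/(Y^q - Y)`, whose absolute value is
`|y|^{qⁿ(1-q)} = |α_i|^{qⁿ(1-q)}`. The group with `i = 1` is alone in having the largest absolute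
value, so in the ultrametric sum it determines the absolute value of the whole sum.
-/

open Filter Topology

namespace FiniteField

variable {Fq K : Type*} [Field Fq] [Fintype Fq] [Field K] [Algebra Fq K]

theorem frobeniusAlgHom_pow_apply (n : ℕ) (x : K) :
    (frobeniusAlgHom Fq K ^ n) x = x ^ Fintype.card Fq ^ n := by
  rw [AlgHom.coe_pow, coe_frobeniusAlgHom, pow_iterate]

open Polynomial in
theorem splits_X_pow_card_sub_X_self : (X ^ Fintype.card Fq - X : Fq[X]).Splits := by
  rw [splits_iff_card_roots, roots_X_pow_card_sub_X,
    X_pow_card_sub_X_natDegree_eq Fq Fintype.one_lt_card]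
  rfl

open Polynomial in
theorem sum_inv_sub_algebraMap (Y : K) (hY : Y ^ Fintype.card Fq ≠ Y) :
    ∑ c : Fq, (Y - algebraMap Fq K c)⁻¹ = -(Y ^ Fintype.card Fq - Y)⁻¹ := by
  set f : K[X] := (X ^ Fintype.card Fq - X : Fq[X]).map (algebraMap Fq K)
  have hroots : f.roots = Finset.univ.val.map (algebraMap Fq K) := by
    rw [splits_X_pow_card_sub_X_self.roots_map_of_injective (algebraMap Fq K).injective,
      roots_X_pow_card_sub_X]
  have heval : f.eval Y = Y ^ Fintype.card Fq - Y := by simp [f]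
  have hderiv : f.derivative.eval Y = -1 := by
    have : derivative (X ^ Fintype.card Fq - X : Fq[X]) = -1 := by
      simp [derivative_X_pow, Nat.cast_card_eq_zero]
    rw [derivative_map, this, Polynomial.map_neg, Polynomial.map_one, eval_neg, eval_one]
  have := (splits_X_pow_card_sub_X_self.map (algebraMap Fq K)).eval_derivative_div_eval_of_ne_zero
    (x := Y) (by rw [heval]; exact sub_ne_zero.2 hY)
  rw [hderiv, heval, hroots] at this
  simpa [neg_div, one_div, Finset.sum_map_val] using this.symm

theorem sum_sub_algebraMap_zpow_one_sub (n : ℕ) (y : K) (hy : y ^ Fintype.card Fq ≠ y) :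
    ∑ c : Fq, (y - algebraMap Fq K c) ^ (1 - (Fintype.card Fq : ℤ) ^ n) =
      (y ^ Fintype.card Fq ^ n - y) /
        (y ^ Fintype.card Fq ^ (n + 1) - y ^ Fintype.card Fq ^ n) := by
  set φ := frobeniusAlgHom Fq K ^ n
  set Y := φ y with hYdef
  have hφ : ∀ x, φ x = x ^ Fintype.card Fq ^ n := frobeniusAlgHom_pow_apply n
  have hYq : Y ^ Fintype.card Fq ≠ Y := by
    rw [hYdef, ← map_pow]
    exact (φ : K →+* K).injective.ne hy
  have hq : (Fintype.card Fq : K) = 0 := by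
    rw [← map_natCast (algebraMap Fq K), Nat.cast_card_eq_zero, map_zero]
  have hterm (c : Fq) : (y - algebraMap Fq K c) ^ (1 - (Fintype.card Fq : ℤ) ^ n) =
      1 + (y - Y) * (Y - algebraMap Fq K c)⁻¹ := by
    have hyc : y - algebraMap Fq K c ≠ 0 := by
      rw [sub_ne_zero]
      rintro rfl
      exact hy (by rw [← map_pow, pow_card])
    have hfrob : (y - algebraMap Fq K c) ^ Fintype.card Fq ^ n = Y - algebraMap Fq K c := by
      rw [← hφ, map_sub, AlgHom.commutes]
    have hYc : Y - algebraMap Fq K c ≠ 0 := hfrob ▸ pow_ne_zero _ hyc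
    rw [zpow_sub₀ hyc, zpow_one, ← Nat.cast_pow, zpow_natCast, hfrob]
    field_simp
    ring
  rw [Finset.sum_congr rfl fun c _ => hterm c, Finset.sum_add_distrib, ← Finset.mul_sum,
    sum_inv_sub_algebraMap Y hYq, Finset.sum_const, Finset.card_univ, nsmul_one,
    hq, hYdef, hφ, ← pow_mul, ← pow_succ]
  ring

theorem card_pow_mul_one_sub_card_neg (n : ℕ) :
    (Fintype.card Fq : ℤ) ^ n * (1 - Fintype.card Fq) < 0 :=
  mul_neg_of_pos_of_neg (by positivity)
    (by linarith [(by exact_mod_cast Fintype.one_lt_card : (1 : ℤ) < Fintype.card Fq)])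

end FiniteField

namespace IsUltrametricDist

variable {E : Type*} [NormedAddCommGroup E] [IsUltrametricDist E]

theorem norm_add_eq_left_of_norm_lt {a b : E} (h : ‖b‖ < ‖a‖) : ‖a + b‖ = ‖a‖ := by
  rw [norm_add_eq_max_of_norm_ne_norm h.ne', max_eq_left h.le]

theorem norm_sub_eq_left_of_norm_lt {a b : E} (h : ‖b‖ < ‖a‖) : ‖a - b‖ = ‖a‖ := by
  rw [sub_eq_add_neg, norm_add_eq_left_of_norm_lt (by rwa [norm_neg])]

theorem norm_tsum_eq_norm_zero_of_forall_le {f : ℕ → E} (hf : Summable f) {r : ℝ}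
    (hr : ∀ i, ‖f (i + 1)‖ ≤ r) (hr0 : r < ‖f 0‖) : ‖∑' i, f i‖ = ‖f 0‖ := by
  rw [hf.tsum_eq_zero_add, norm_add_eq_left_of_norm_lt]
  exact (norm_tsum_le_of_forall_le_of_nonneg ((norm_nonneg _).trans (hr 0)) hr).trans_lt hr0

end IsUltrametricDist

open IsUltrametricDist

theorem norm_algebraMap_le_one (Fq : Type*) {K : Type*} [Field Fq] [Fintype Fq] [NormedRing K]
    [NormMulClass K] [NormOneClass K] [Algebra Fq K] (c : Fq) : ‖algebraMap Fq K c‖ ≤ 1 := by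
  rcases eq_or_ne c 0 with rfl | hc
  · simp
  · refine (((algebraMap Fq K : Fq →* K).isOfFinOrder ?_).norm_eq_one).le
    exact isOfFinOrder_iff_pow_eq_one.2
      ⟨_, Nat.sub_pos_of_lt Fintype.one_lt_card, FiniteField.pow_card_sub_one_eq_one c hc⟩

section OrderedField

variable {𝕜 : Type*} [Semifield 𝕜] [LinearOrder 𝕜] [IsStrictOrderedRing 𝕜] {a b : 𝕜} {s : ℤ}

theorem zpow_le_zpow_left_of_nonpos (ha : 0 < a) (hab : a ≤ b) (hs : s ≤ 0) : b ^ s ≤ a ^ s := by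
  simpa only [zpow_neg, inv_inv] using
    inv_anti₀ (zpow_pos ha _) (zpow_le_zpow_left₀ (neg_nonneg.2 hs) ha.le hab)

theorem zpow_lt_zpow_left_of_neg (ha : 0 < a) (hab : a < b) (hs : s < 0) : b ^ s < a ^ s := by
  simpa only [zpow_neg, inv_inv] using
    inv_strictAnti₀ (zpow_pos ha _) (zpow_lt_zpow_left₀ (neg_pos.2 hs) ha.le hab)

end OrderedField

section UltrametricField

variable {K : Type*} [NormedField K] [IsUltrametricDist K]

theorem norm_pow_sub_pow_of_one_lt {y : K} (hy : 1 < ‖y‖) {a b : ℕ} (hab : a < b) :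
    ‖y ^ b - y ^ a‖ = ‖y‖ ^ b := by
  rw [norm_sub_eq_left_of_norm_lt, norm_pow]
  rw [norm_pow, norm_pow]
  exact pow_lt_pow_right₀ hy hab

theorem norm_pow_sub_div_pow_sub {y : K} (hy : 1 < ‖y‖) {q n : ℕ} (hq : 2 ≤ q) (hn : 1 ≤ n) :
    ‖(y ^ q ^ n - y) / (y ^ q ^ (n + 1) - y ^ q ^ n)‖ = ‖y‖ ^ ((q : ℤ) ^ n * (1 - q)) := by
  have hnum : ‖y ^ q ^ n - y‖ = ‖y‖ ^ q ^ n := by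
    simpa only [pow_one] using norm_pow_sub_pow_of_one_lt hy (Nat.one_lt_pow (by omega) hq)
  rw [norm_div, hnum, norm_pow_sub_pow_of_one_lt hy (Nat.pow_lt_pow_right hq (by omega)),
    ← zpow_natCast, ← zpow_natCast, ← zpow_sub₀ (by positivity)]
  congr 1
  push_cast
  ring

variable (Fq : Type*) [Field Fq] [Fintype Fq] [Algebra Fq K]

theorem norm_sum_algebraMap_mul_add {β : ℕ → K} (hβ : StrictMono fun k => ‖β k‖) (i : ℕ)
    (d : Fin i → Fq) : ‖∑ j : Fin i, algebraMap Fq K (d j) * β j + β i‖ = ‖β i‖ := by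
  cases i with
  | zero => simp
  | succ k =>
    rw [add_comm, norm_add_eq_left_of_norm_lt]
    refine (norm_sum_le_of_forall_le_of_nonneg (norm_nonneg (β k)) fun j _ => ?_).trans_lt
      (hβ k.lt_succ_self)
    calc ‖algebraMap Fq K (d j) * β j‖ ≤ 1 * ‖β j‖ := by
          rw [norm_mul]
          exact mul_le_mul_of_nonneg_right (norm_algebraMap_le_one Fq _) (norm_nonneg _)
      _ ≤ ‖β k‖ := by
          rw [one_mul]
          exact hβ.monotone (Nat.lt_succ_iff.mp j.2)

end UltrametricField

theorem sum_pi_fin_succ_eq_sum_sum_algebraMap_add {R K M : Type*} [CommSemiring R] [Fintype R]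
    [Semiring K] [Algebra R K] [AddCommMonoid M] (F : K → M)
    {α : ℕ → K} (hα0 : α 0 = 1) (i : ℕ) :
    ∑ c : Fin (i + 1) → R, F (∑ j, algebraMap R K (c j) * α j + α (i + 1)) =
      ∑ d : Fin i → R, ∑ c₀ : R,
        F (algebraMap R K c₀ + (∑ j : Fin i, algebraMap R K (d j) * α (j + 1) + α (i + 1))) := by
  rw [← (Fin.consEquiv fun _ => R).sum_comp, Fintype.sum_prod_type, Finset.sum_comm]
  simp [Fin.sum_univ_succ, Fin.consEquiv, hα0, add_assoc]

section Zeta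

variable {K : Type*} [NormedField K] [IsUltrametricDist K] (Fq : Type*) [Field Fq] [Fintype Fq]
  [Algebra Fq K]

theorem norm_sum_algebraMap_add_zpow_one_sub {y : K} (hy : 1 < ‖y‖) {n : ℕ} (hn : 1 ≤ n) :
    ‖∑ c : Fq, (algebraMap Fq K c + y) ^ (1 - (Fintype.card Fq : ℤ) ^ n)‖ =
      ‖y‖ ^ ((Fintype.card Fq : ℤ) ^ n * (1 - Fintype.card Fq)) := by
  have hyq : y ^ Fintype.card Fq ≠ y := by
    refine fun h => (pow_lt_pow_right₀ hy (Fintype.one_lt_card (α := Fq))).ne' ?_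
    rw [← norm_pow, h, pow_one]
  rw [← Equiv.sum_comp (Equiv.neg Fq)]
  simp only [Equiv.neg_apply, map_neg, neg_add_eq_sub]
  rw [FiniteField.sum_sub_algebraMap_zpow_one_sub n y hyq,
    norm_pow_sub_div_pow_sub hy Fintype.one_lt_card hn]

theorem summable_zpow_one_sub [CompleteSpace K] {α : ℕ → K} (hα : StrictMono fun k => ‖α k‖)
    (htend : Tendsto (fun i => ‖α i‖) atTop atTop) {n : ℕ} (hn : 1 ≤ n) :
    Summable fun p : Σ i : ℕ, Fin (i + 1) → Fq =>
      (∑ j, algebraMap Fq K (p.2 j) * α j + α (p.1 + 1)) ^ (1 - (Fintype.card Fq : ℤ) ^ n) := by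
  apply NonarchimedeanAddGroup.summable_of_tendsto_cofinite_zero
  have hfst : Tendsto (Sigma.fst : (Σ i : ℕ, Fin (i + 1) → Fq) → ℕ) cofinite atTop :=
    Nat.cofinite_eq_atTop ▸ Tendsto.cofinite_of_finite_preimage_singleton fun i =>
      ((Set.finite_range (Sigma.mk i)).subset (by rintro ⟨j, c⟩ rfl; exact ⟨c, rfl⟩)).to_subtype
  have hneg : 1 - (Fintype.card Fq : ℤ) ^ n < 0 := by
    have : 1 < Fintype.card Fq ^ n := Nat.one_lt_pow (by omega) Fintype.one_lt_card
    linarith [(by exact_mod_cast this : (1 : ℤ) < (Fintype.card Fq : ℤ) ^ n)]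
  rw [tendsto_zero_iff_norm_tendsto_zero]
  convert ((tendsto_zpow_atTop_zero hneg).comp (htend.comp (tendsto_add_atTop_nat 1))).comp hfst
    using 2 with p
  simp [norm_zpow, norm_sum_algebraMap_mul_add Fq hα]

theorem norm_tsum_zpow_one_sub [CompleteSpace K] {α : ℕ → K} (hα0 : α 0 = 1)
    (hα : StrictMono fun k => ‖α k‖) (htend : Tendsto (fun i => ‖α i‖) atTop atTop) {n : ℕ}
    (hn : 1 ≤ n) :
    ‖∑' p : Σ i : ℕ, Fin (i + 1) → Fq,
        (∑ j, algebraMap Fq K (p.2 j) * α j + α (p.1 + 1)) ^ (1 - (Fintype.card Fq : ℤ) ^ n)‖ =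
      ‖α 1‖ ^ ((Fintype.card Fq : ℤ) ^ n * (1 - Fintype.card Fq)) := by
  set e : ℤ := 1 - (Fintype.card Fq : ℤ) ^ n
  set s : ℤ := (Fintype.card Fq : ℤ) ^ n * (1 - Fintype.card Fq)
  have hs : s < 0 := FiniteField.card_pow_mul_one_sub_card_neg n
  have hone (i : ℕ) : 1 < ‖α (i + 1)‖ := by simpa [hα0] using hα i.succ_pos
  have hfiber (i : ℕ) (d : Fin i → Fq) : ‖∑ c₀ : Fq,
      (algebraMap Fq K c₀ + (∑ j : Fin i, algebraMap Fq K (d j) * α (j + 1) + α (i + 1))) ^ e‖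
        = ‖α (i + 1)‖ ^ s := by
    have hy := norm_sum_algebraMap_mul_add Fq (β := fun k => α (k + 1))
      (hα.comp (strictMono_id.add_const 1)) i d
    rw [norm_sum_algebraMap_add_zpow_one_sub Fq (hy ▸ hone i) hn, hy]
  have hf := summable_zpow_one_sub Fq hα htend hn
  set G : ℕ → K := fun i => ∑ c : Fin (i + 1) → Fq,
    (∑ j, algebraMap Fq K (c j) * α j + α (i + 1)) ^ e
  have hG : Summable G := by simpa only [tsum_fintype] using hf.sigma
  have hGle (i : ℕ) : ‖G i‖ ≤ ‖α (i + 1)‖ ^ s := by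
    simp only [G, sum_pi_fin_succ_eq_sum_sum_algebraMap_add (· ^ e) hα0]
    exact norm_sum_le_of_forall_le_of_nonneg (by positivity) fun d _ => (hfiber i d).le
  have hG0 : ‖G 0‖ = ‖α 1‖ ^ s := by
    simp only [G, sum_pi_fin_succ_eq_sum_sum_algebraMap_add (· ^ e) hα0, Fintype.sum_unique]
    exact hfiber 0 _
  have hGtail (i : ℕ) : ‖G (i + 1)‖ ≤ ‖α 2‖ ^ s :=
    (hGle (i + 1)).trans <|
      zpow_le_zpow_left_of_nonpos (one_pos.trans (hone 1)) (hα.monotone (by omega)) hs.le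
  have hdom : ‖α 2‖ ^ s < ‖G 0‖ :=
    hG0 ▸ zpow_lt_zpow_left_of_neg (one_pos.trans (hone 0)) (hα one_lt_two) hs
  rw [hf.tsum_sigma]
  simp only [tsum_fintype]
  rw [norm_tsum_eq_norm_zero_of_forall_le hG hGtail hdom, hG0]

end Zeta

/-- **Corollary 5.4 ('boundonzetaa').**  Let `q` be a power of a prime (realized as the
cardinality of a finite field `Fq`) and let `C` be a field which is an `Fq`-algebra, complete
with respect to a multiplicative nonarchimedean absolute value (encoded as a complete normed
field whose norm is nonarchimedean).  Let `α : ℕ → C` satisfy `α 0 = 1`,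
`‖α i‖ < ‖α (i+1)‖` for all `i`, and `‖α i‖ → ∞`.  Then for every `n ≥ 1` the sum
`ẑ(qⁿ−1) = ∑_{i ≥ 1} ∑_{c ∈ Fq^i} (c₀α₀ + ⋯ + c_{i-1}α_{i-1} + α_i)^{1-qⁿ}`
(indexed below by pairs `(i, c)` with `i + 1` playing the role of the index `≥ 1`)
satisfies `|ẑ(qⁿ−1)| = |α₁|^{qⁿ(1-q)}`, and in particular `|ẑ(qⁿ−1)| < 1`. -/
theorem stmt4 (Fq C : Type*) [Field Fq] [Fintype Fq] [NormedField C] [CompleteSpace C]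
    [Algebra Fq C]
    (q : ℕ) (hq : q = Fintype.card Fq)
    (hna : IsNonarchimedean (fun x : C => ‖x‖))
    (α : ℕ → C) (hα0 : α 0 = 1)
    (hmono : ∀ i : ℕ, ‖α i‖ < ‖α (i + 1)‖)
    (htend : Filter.Tendsto (fun i : ℕ => ‖α i‖) Filter.atTop Filter.atTop)
    (n : ℕ) (hn : 1 ≤ n) :
    ‖∑' p : Σ i : ℕ, Fin (i + 1) → Fq,
        (∑ j : Fin (p.1 + 1), algebraMap Fq C (p.2 j) * α (j : ℕ) + α (p.1 + 1))
          ^ (1 - (q : ℤ) ^ n)‖ = ‖α 1‖ ^ ((q : ℤ) ^ n * (1 - (q : ℤ))) ∧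
      ‖∑' p : Σ i : ℕ, Fin (i + 1) → Fq,
        (∑ j : Fin (p.1 + 1), algebraMap Fq C (p.2 j) * α (j : ℕ) + α (p.1 + 1))
          ^ (1 - (q : ℤ) ^ n)‖ < 1 := by
  subst hq
  have : IsUltrametricDist C := .isUltrametricDist_of_isNonarchimedean_norm hna
  have hnorm := norm_tsum_zpow_one_sub Fq hα0 (strictMono_nat_of_lt_succ hmono) htend hn
  have hα1 : 1 < ‖α 1‖ := by simpa [hα0] using hmono 0
  exact ⟨hnorm, hnorm ▸ zpow_lt_one_of_neg₀ hα1 (FiniteField.card_pow_mul_one_sub_card_neg n)⟩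
end

section
/- Let q be a power of a prime p and let C be a field that is an F_q-algebra, carrying a multiplicative nonarchimedean absolute value |·| with respect to which C is complete. Let α : ℕ → C satisfy α_0 = 1, |α_i| < |α_{i+1}| for all i, and |α_i| → ∞. Define Z(m) := ∑_{i ∈ ℕ} ∑_{(c_0, …, c_{i−1}) ∈ F_q^i} (c_0α_0 + ⋯ + c_{i−1}α_{i−1} + α_i)^{−m} (the i = 0 term being α_0^{−m} = 1). Then for every integer n ≥ 1, |Z(q^n − 1)| = 1; in particular Z(q^n − 1) ≠ 0. -/
/-- **Nonvanishing of the zeta values `ζ^𝔞(qⁿ − 1)`.**  Let `q` be a power of a prime (realized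
as the cardinality of a finite field `Fq`) and let `C` be a field which is an `Fq`-algebra,
complete with respect to a multiplicative nonarchimedean absolute value (encoded as a complete
normed field whose norm is nonarchimedean).  Let `α : ℕ → C` satisfy `α 0 = 1`,
`‖α i‖ < ‖α (i+1)‖` for all `i`, and `‖α i‖ → ∞`.  Set
`Z(m) = ∑_{i ∈ ℕ} ∑_{c ∈ Fq^i} (c₀α₀ + ⋯ + c_{i-1}α_{i-1} + α i)^{-m}`.  Then for every
`n ≥ 1`, `|Z(qⁿ − 1)| = 1`; in particular `Z(qⁿ − 1) ≠ 0`. -/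
theorem stmt5 (Fq C : Type*) [Field Fq] [Fintype Fq] [NormedField C] [CompleteSpace C]
    [Algebra Fq C]
    (q : ℕ) (hq : q = Fintype.card Fq)
    (hna : IsNonarchimedean (fun x : C => ‖x‖))
    (α : ℕ → C) (hα0 : α 0 = 1)
    (hmono : ∀ i : ℕ, ‖α i‖ < ‖α (i + 1)‖)
    (htend : Filter.Tendsto (fun i : ℕ => ‖α i‖) Filter.atTop Filter.atTop)
    (n : ℕ) (hn : 1 ≤ n) :
    ‖∑' p : Σ i : ℕ, Fin i → Fq,
        (∑ j : Fin p.1, algebraMap Fq C (p.2 j) * α (j : ℕ) + α p.1)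
          ^ (-((q : ℤ) ^ n - 1))‖ = 1 ∧
      (∑' p : Σ i : ℕ, Fin i → Fq,
        (∑ j : Fin p.1, algebraMap Fq C (p.2 j) * α (j : ℕ) + α p.1)
          ^ (-((q : ℤ) ^ n - 1))) ≠ 0 := by
  classical
  haveI : IsUltrametricDist C :=
    IsUltrametricDist.isUltrametricDist_of_isNonarchimedean_norm hna
  have hq2 : 2 ≤ q := hq ▸ Fintype.one_lt_card
  set m : ℤ := (q : ℤ) ^ n - 1 with hm
  have hm1 : 1 ≤ m := by
    have h1 : (q : ℤ) ≤ (q : ℤ) ^ n := le_self_pow₀ (by exact_mod_cast hq2.trans' one_le_two) (by omega)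
    omega
  set f : (Σ i : ℕ, Fin i → Fq) → C := fun p =>
    (∑ j : Fin p.1, algebraMap Fq C (p.2 j) * α (j : ℕ) + α p.1) ^ (-m) with hf
  have hsm : StrictMono fun i => ‖α i‖ := strictMono_nat_of_lt_succ hmono
  have hα0n : ‖α 0‖ = 1 := by rw [hα0, norm_one]
  have hge1 : ∀ i, 1 ≤ ‖α i‖ := fun i => hα0n ▸ hsm.monotone (Nat.zero_le i)
  have hpos : ∀ i, 0 < ‖α i‖ := fun i => lt_of_lt_of_le one_pos (hge1 i)
  -- norm of elements of Fq in C is at most 1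
  have hc : ∀ c : Fq, ‖algebraMap Fq C c‖ ≤ 1 := by
    intro c
    rcases eq_or_ne c 0 with rfl | hc0
    · simp
    have h1 : c ^ (Fintype.card Fq - 1) = 1 := FiniteField.pow_card_sub_one_eq_one c hc0
    have h2 : ‖algebraMap Fq C c‖ ^ (Fintype.card Fq - 1) = 1 := by
      rw [← norm_pow, ← map_pow, h1, map_one, norm_one]
    have hk : Fintype.card Fq - 1 ≠ 0 := by omega
    by_contra hlt
    push_neg at hlt
    have := one_lt_pow₀ hlt hk
    rw [h2] at this
    exact lt_irrefl 1 this
  -- norm of each base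
  have hbase : ∀ (i : ℕ) (c : Fin i → Fq),
      ‖∑ j : Fin i, algebraMap Fq C (c j) * α (j : ℕ) + α i‖ = ‖α i‖ := by
    intro i c
    rcases Nat.eq_zero_or_pos i with rfl | hi
    · simp
    have hsum : ‖∑ j : Fin i, algebraMap Fq C (c j) * α (j : ℕ)‖ < ‖α i‖ := by
      have hle : ‖∑ j : Fin i, algebraMap Fq C (c j) * α (j : ℕ)‖ ≤ ‖α (i - 1)‖ := by
        apply IsUltrametricDist.norm_sum_le_of_forall_le_of_nonneg (le_of_lt (hpos _))
        intro j _
        rw [norm_mul]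
        calc ‖algebraMap Fq C (c j)‖ * ‖α (j : ℕ)‖
            ≤ 1 * ‖α (i - 1)‖ := by
              apply mul_le_mul (hc _) (hsm.monotone (by omega)) (norm_nonneg _) zero_le_one
          _ = ‖α (i - 1)‖ := one_mul _
      exact lt_of_le_of_lt hle (hsm (by omega))
    have hne : ‖∑ j : Fin i, algebraMap Fq C (c j) * α (j : ℕ)‖ ≠ ‖α i‖ := ne_of_lt hsum
    rw [IsUltrametricDist.norm_add_eq_max_of_norm_ne_norm hne, max_eq_right hsum.le]
  have hnormf : ∀ p : Σ i : ℕ, Fin i → Fq, ‖f p‖ = ‖α p.1‖ ^ (-m) := by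
    intro p
    rw [hf, norm_zpow, hbase]
  -- summability
  have hsummable : Summable f := by
    apply NonarchimedeanAddGroup.summable_of_tendsto_cofinite_zero
    rw [tendsto_zero_iff_norm_tendsto_zero]
    have hfst : Filter.Tendsto (Sigma.fst : (Σ i : ℕ, Fin i → Fq) → ℕ)
        Filter.cofinite Filter.cofinite := by
      intro s hs
      rw [Filter.mem_map, Filter.mem_cofinite] at *
      rw [← Set.preimage_compl]
      apply Set.Finite.preimage' hs
      intro i _
      apply Set.Finite.subset
        (Set.finite_range fun c : Fin i → Fq => (⟨i, c⟩ : Σ i : ℕ, Fin i → Fq))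
      rintro ⟨i', c'⟩ hp
      simp only [Set.mem_preimage, Set.mem_singleton_iff] at hp
      subst hp
      exact ⟨c', rfl⟩
    have hg : Filter.Tendsto (fun i : ℕ => ‖α i‖ ^ (-m)) Filter.cofinite (nhds 0) := by
      rw [Nat.cofinite_eq_atTop]
      exact (tendsto_zpow_atTop_zero (by omega)).comp htend
    have : (fun p : Σ i : ℕ, Fin i → Fq => ‖f p‖)
        = (fun i : ℕ => ‖α i‖ ^ (-m)) ∘ Sigma.fst := by
      funext p; exact hnormf p
    rw [this]
    exact hg.comp hfst
  -- the distinguished term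
  set p0 : Σ i : ℕ, Fin i → Fq := ⟨0, fun j => j.elim0⟩ with hp0
  have hf0 : f p0 = 1 := by simp [hf, hp0, hα0]
  have hsplit := Summable.tsum_eq_add_tsum_ite hsummable p0
  -- bound the remainder
  set c0 : ℝ := ‖α 1‖ ^ (-m) with hc0
  have hc0nonneg : 0 ≤ c0 := zpow_nonneg (norm_nonneg _) _
  have hc0lt : c0 < 1 := zpow_lt_one_of_neg₀ (hα0n ▸ hsm Nat.zero_lt_one) (by omega)
  have hrest : ‖∑' p : Σ i : ℕ, Fin i → Fq, if p = p0 then 0 else f p‖ ≤ c0 := by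
    apply IsUltrametricDist.norm_tsum_le_of_forall_le_of_nonneg hc0nonneg
    intro p
    by_cases hp : p = p0
    · simp [hp, hc0nonneg]
    · rw [if_neg hp, hnormf]
      have h1p : 1 ≤ p.1 := by
        by_contra h
        push_neg at h
        interval_cases h' : p.1
        · apply hp
          obtain ⟨i, c⟩ := p
          simp only at h'
          subst h'
          rw [hp0]
          congr 1
          funext j
          exact j.elim0
      rw [hc0]
      calc ‖α p.1‖ ^ (-m) = (‖α p.1‖ ^ m)⁻¹ := by rw [zpow_neg]
        _ ≤ (‖α 1‖ ^ m)⁻¹ := by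
            apply inv_anti₀ (zpow_pos (hpos 1) m)
            obtain ⟨k, hk⟩ : ∃ k : ℕ, m = (k : ℤ) := ⟨m.toNat, (Int.toNat_of_nonneg (by omega)).symm⟩
            rw [hk, zpow_natCast, zpow_natCast]
            exact pow_le_pow_left₀ (le_of_lt (hpos 1)) (hsm.monotone h1p) k
        _ = ‖α 1‖ ^ (-m) := by rw [zpow_neg]
  -- conclude
  have hZ : ‖∑' p : Σ i : ℕ, Fin i → Fq,
      (∑ j : Fin p.1, algebraMap Fq C (p.2 j) * α (j : ℕ) + α p.1) ^ (-m)‖ = 1 := by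
    show ‖∑' p, f p‖ = 1
    rw [hsplit, hf0]
    have hne : ‖∑' p : Σ i : ℕ, Fin i → Fq, if p = p0 then 0 else f p‖ ≠ ‖(1 : C)‖ := by
      rw [norm_one]
      exact ne_of_lt (lt_of_le_of_lt hrest hc0lt)
    rw [IsUltrametricDist.norm_add_eq_max_of_norm_ne_norm hne.symm, norm_one]
    exact max_eq_left (le_of_lt (lt_of_le_of_lt hrest hc0lt))
  refine ⟨hZ, fun h0 => ?_⟩
  rw [h0, norm_zero] at hZ
  exact zero_ne_one hZ
end

section
/- Let q be a power of a prime p and let C be a field that is an F_q-algebra, carrying a multiplicative nonarchimedean absolute value |·| with respect to which C is complete. Let M ⊆ C be an F_q-subspace of C, and let n ≥ 1 be an integer not divisible by q − 1. If the family x ↦ x^{−n}, indexed by the nonzero elements x of M, is summable, then ∑_{x ∈ M, x ≠ 0} x^{−n} = 0. -/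
/-- **Vanishing of `ζ^𝔞(n)` for `n` not 'even'.**  Let `q` be a power of a prime (realized as
the cardinality of a finite field `Fq`) and let `C` be a field which is an `Fq`-algebra,
complete with respect to a multiplicative nonarchimedean absolute value (encoded as a complete
normed field whose norm is nonarchimedean).  Let `M ⊆ C` be an `Fq`-subspace and let `n ≥ 1`
be an integer not divisible by `q − 1`.  If the family `x ↦ x^{−n}` indexed by the nonzero
elements of `M` is summable, then `∑_{0 ≠ x ∈ M} x^{−n} = 0`. -/
theorem stmt7 (Fq C : Type*) [Field Fq] [Fintype Fq] [NormedField C] [CompleteSpace C]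
    [Algebra Fq C]
    (q : ℕ) (hq : q = Fintype.card Fq)
    (hna : IsNonarchimedean (fun x : C => ‖x‖))
    (M : Submodule Fq C)
    (n : ℕ) (hn : 1 ≤ n) (hdvd : ¬ (q - 1) ∣ n)
    (hsum : Summable (fun x : {x : M // x ≠ 0} => ((x : C)) ^ (-(n : ℤ)))) :
    ∑' x : {x : M // x ≠ 0}, ((x : C)) ^ (-(n : ℤ)) = 0 := by
  classical
  -- a generator of the cyclic group `Fqˣ`
  obtain ⟨g, hg⟩ := IsCyclic.exists_generator (α := Fqˣ)
  have horder : orderOf g = q - 1 := by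
    rw [orderOf_eq_card_of_forall_mem_zpowers hg, hq, Nat.card_eq_fintype_card,
      Fintype.card_units]
  have hgn : g ^ n ≠ 1 := by
    intro h
    exact hdvd (horder ▸ orderOf_dvd_of_pow_eq_one h)
  -- the image of `g` in `C`
  set a : C := algebraMap Fq C (g : Fq) with ha
  have ha0 : a ≠ 0 := by
    simp [ha, map_eq_zero, Units.ne_zero]
  have han : a ^ n ≠ 1 := by
    intro h
    apply hgn
    have : algebraMap Fq C ((g : Fq) ^ n) = algebraMap Fq C 1 := by
      simpa [ha, map_pow] using h
    have : (g : Fq) ^ n = 1 := (algebraMap Fq C).injective this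
    ext
    simpa using this
  -- scaling by `g` permutes the nonzero elements of `M`
  have hsmul_ne : ∀ (c : Fqˣ) (x : {x : M // x ≠ 0}), (c : Fq) • x.1 ≠ 0 := by
    intro c x h
    apply x.2
    have := congrArg (fun y => (c⁻¹ : Fq) • y) h
    simpa [smul_smul, Units.inv_mul_eq_iff_eq_mul] using this
  let e : {x : M // x ≠ 0} ≃ {x : M // x ≠ 0} :=
  { toFun := fun x => ⟨(g : Fq) • x.1, hsmul_ne g x⟩
    invFun := fun x => ⟨((g⁻¹ : Fqˣ) : Fq) • x.1, hsmul_ne g⁻¹ x⟩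
    left_inv := by
      intro x
      ext
      simp [smul_smul, ← Units.val_mul]
    right_inv := by
      intro x
      ext
      simp [smul_smul, ← Units.val_mul] }
  set S := ∑' x : {x : M // x ≠ 0}, ((x : C)) ^ (-(n : ℤ)) with hS
  have key : S = a ^ (-(n : ℤ)) * S := by
    conv_lhs => rw [hS, ← Equiv.tsum_eq e (fun x : {x : M // x ≠ 0} => ((x : C)) ^ (-(n : ℤ)))]
    have hterm : ∀ x : {x : M // x ≠ 0},
        (((e x : M) : C)) ^ (-(n : ℤ)) = a ^ (-(n : ℤ)) * ((x : C)) ^ (-(n : ℤ)) := by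
      intro x
      have : ((e x : M) : C) = a * (x : C) := by
        show (((g : Fq) • x.1 : M) : C) = a * (x : C)
        rw [Submodule.coe_smul, Algebra.smul_def]
      rw [this, mul_zpow]
    simp only [hterm]
    exact tsum_mul_left
  have hne : a ^ (-(n : ℤ)) ≠ 1 := by
    simpa [zpow_neg, zpow_natCast, inv_eq_one] using han
  have : (1 - a ^ (-(n : ℤ))) * S = 0 := by
    rw [sub_mul, one_mul, ← key, sub_self]
  rcases mul_eq_zero.mp this with h | h
  · exact absurd (sub_eq_zero.mp h).symm hne
  · exact h
end

section
/- Let R be a Dedekind domain which is not a field, let K be its field of fractions, and let 𝔞 be a nonzero fractional ideal of R. For each height-one prime v of R let K_v denote the v-adic completion of K, let O_v ⊆ K_v denote the ring of v-adic integers, and let 𝔞_v ⊆ K_v denote the O_v-submodule of K_v generated by the image of 𝔞. Then there is an R-linear map Φ : K → ⨁_v K_v/𝔞_v (direct sum over all height-one primes v of R) whose v-th component sends x ∈ K to the class of x in K_v/𝔞_v; moreover Φ is surjective and its kernel is exactly 𝔞. Consequently there is an isomorphism of R-modules K/𝔞 ≅ ⨁_v K_v/𝔞_v. -/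
/-!
Since `𝔞_v` is the `O_v`-span of the image of `𝔞` and the valuation is ultrametric, `y ∈ K_v`
lies in `𝔞_v` exactly when `v(y) ≤ v(b)` for some `b ∈ 𝔞`. Hence a fixed nonzero `b ∈ 𝔞` puts
almost every component of `x ∈ K` in `𝔞_v`, and the kernel consists of those `x` with
`x 𝔞⁻¹ ⊆ R`, which is `𝔞`. For surjectivity it suffices to hit a class supported at one `v`.
By density it is represented by some `x₀ ∈ K`; choose `r ≠ 0` in `R` with `r x₀ ∈ 𝔞` and, by the
Chinese remainder theorem, `t ∈ R` with `t ≡ 1` modulo `r` at `v` and `t ≡ 0` modulo `r` at every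
other prime. Then `t x₀` maps to the given class at `v` and to `0` elsewhere.
-/

set_option synthInstance.maxHeartbeats 1000000
set_option maxHeartbeats 1000000

open IsDedekindDomain IsDedekindDomain.HeightOneSpectrum DirectSum

variable (R : Type*) [CommRing R] [IsDedekindDomain R]
  (K : Type*) [Field K] [Algebra R K] [IsFractionRing R K]

/-- `𝔞_v`: the `O_v`-submodule of the `v`-adic completion `K_v` of `K` generated by the image
of the fractional ideal `𝔞` under the canonical map `K → K_v`. -/
noncomputable def localSpan (a : FractionalIdeal (nonZeroDivisors R) K)
    (v : HeightOneSpectrum R) :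
    Submodule (v.adicCompletionIntegers K) (v.adicCompletion K) :=
  Submodule.span (v.adicCompletionIntegers K)
    (algebraMap K (v.adicCompletion K) '' ((a : Submodule R K) : Set K))

open Topology

namespace DirectSum

variable {ι S M : Type*} {N : ι → Type*} [Semiring S] [AddCommMonoid M] [Module S M]
  [∀ i, AddCommMonoid (N i)] [∀ i, Module S (N i)]

noncomputable def linearMapOfFinite (f : ∀ i, M →ₗ[S] N i) (hf : ∀ x, {i | f i x ≠ 0}.Finite) :
    M →ₗ[S] ⨁ i, N i where
  toFun x := ⟨fun i => f i x, Trunc.mk ⟨(hf x).toFinset.val, fun i =>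
    (em (f i x = 0)).elim Or.inr fun h => Or.inl ((hf x).mem_toFinset.2 h)⟩⟩
  map_add' x y := DFinsupp.ext fun i => map_add (f i) x y
  map_smul' c x := DFinsupp.ext fun i => map_smul (f i) c x

theorem surjective_of_forall_exists_eq_of [DecidableEq ι] (f : M →ₗ[S] ⨁ i, N i)
    (h : ∀ i (y : N i), ∃ x, f x = of N i y) : Function.Surjective f := by
  intro q
  induction q using DirectSum.induction_on with
  | zero => exact ⟨0, map_zero f⟩
  | of i y => exact h i y
  | add q₁ q₂ h₁ h₂ =>
    obtain ⟨x₁, rfl⟩ := h₁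
    obtain ⟨x₂, rfl⟩ := h₂
    exact ⟨x₁ + x₂, map_add f x₁ x₂⟩

end DirectSum

theorem IsDedekindDomain.exists_forall_intValuation_sub_le {A : Type*} [CommRing A]
    [IsDedekindDomain A] {r : A} (hr : r ≠ 0) (τ : HeightOneSpectrum A → A) :
    ∃ t : A, ∀ w : HeightOneSpectrum A, w.intValuation (t - τ w) ≤ w.intValuation r := by
  classical
  have hfin := Ideal.finite_factors (I := Ideal.span {r}) (by simpa using hr)
  obtain ⟨t, ht⟩ := exists_forall_sub_mem_ideal (s := hfin.toFinset) (fun w => w.asIdeal)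
    (fun w => (Associates.mk w.asIdeal).count (Associates.mk (Ideal.span {r})).factors)
    (fun w _ => Ideal.prime_of_isPrime w.ne_bot w.isPrime)
    (fun _ _ _ _ hne h => hne (HeightOneSpectrum.ext h)) (fun w => τ w)
  refine ⟨t, fun w => ?_⟩
  by_cases hw : w ∈ hfin.toFinset
  · rw [w.intValuation_if_neg hr, w.intValuation_le_pow_iff_mem]
    exact ht w hw
  · have hw1 : w.intValuation r = 1 := by
      refine le_antisymm (w.intValuation_le_one r) (not_lt.1 fun h => hw ?_)
      exact hfin.mem_toFinset.2 ((w.intValuation_lt_one_iff_dvd r).1 h)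
    exact hw1 ▸ w.intValuation_le_one _

section LocalSpan

variable {R K} {a : FractionalIdeal (nonZeroDivisors R) K} {v : HeightOneSpectrum R}

theorem valued_algebraMap_adicCompletion (x : K) :
    Valued.v (algebraMap K (v.adicCompletion K) x) = v.valuation K x :=
  valuedAdicCompletion_eq_valuation' v x

theorem mem_localSpan_iff {y : v.adicCompletion K} :
    y ∈ localSpan R K a v ↔ ∃ b ∈ (a : Submodule R K), Valued.v y ≤ v.valuation K b := by
  constructor
  · intro hy
    induction hy using Submodule.span_induction with
    | mem _ hy =>
      obtain ⟨b, hb, rfl⟩ := hy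
      exact ⟨b, hb, (valued_algebraMap_adicCompletion b).le⟩
    | zero => exact ⟨0, zero_mem _, by simp⟩
    | add y z _ _ hy hz =>
      obtain ⟨b, hb, hyb⟩ := hy
      obtain ⟨c, hc, hzc⟩ := hz
      rcases le_total (v.valuation K b) (v.valuation K c) with hbc | hcb
      · exact ⟨c, hc, (Valued.v.map_add y z).trans (max_le (hyb.trans hbc) hzc)⟩
      · exact ⟨b, hb, (Valued.v.map_add y z).trans (max_le hyb (hzc.trans hcb))⟩
    | smul u y _ hy =>
      obtain ⟨b, hb, hyb⟩ := hy
      refine ⟨b, hb, ?_⟩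
      calc Valued.v ((u : v.adicCompletion K) * y)
          = Valued.v (u : v.adicCompletion K) * Valued.v y := Valued.v.map_mul _ _
        _ ≤ 1 * v.valuation K b := mul_le_mul' u.2 hyb
        _ = v.valuation K b := one_mul _
  · rintro ⟨b, hb, hyb⟩
    by_cases hb0 : b = 0
    · rw [hb0, map_zero, le_zero_iff, Valuation.zero_iff] at hyb
      exact hyb ▸ zero_mem _
    have hB : algebraMap K (v.adicCompletion K) b ≠ 0 := by simpa using hb0
    have hu : Valued.v (y * (algebraMap K (v.adicCompletion K) b)⁻¹) ≤ 1 := by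
      rw [map_mul, map_inv₀, valued_algebraMap_adicCompletion]
      exact mul_inv_le_one_of_le₀ hyb zero_le
    have hy : y = (⟨_, hu⟩ : v.adicCompletionIntegers K) • algebraMap K _ b :=
      (inv_mul_cancel_right₀ hB y).symm
    exact hy ▸ Submodule.smul_mem _ _ (Submodule.subset_span ⟨b, hb, rfl⟩)

theorem algebraMap_mem_localSpan_iff {x : K} :
    algebraMap K (v.adicCompletion K) x ∈ localSpan R K a v ↔
      ∃ b ∈ (a : Submodule R K), v.valuation K x ≤ v.valuation K b := by
  rw [mem_localSpan_iff, valued_algebraMap_adicCompletion]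

theorem FractionalIdeal.exists_ne_zero_smul_mem (ha : a ≠ 0) (x : K) :
    ∃ r : R, r ≠ 0 ∧ r • x ∈ (a : Submodule R K) := by
  obtain ⟨c, hc0, hc⟩ := a.exists_ne_zero_mem_isInteger ha
  obtain ⟨⟨n, s⟩, hs⟩ := IsLocalization.surj (nonZeroDivisors R) x
  refine ⟨c * s, mul_ne_zero hc0 (nonZeroDivisors.coe_ne_zero s), ?_⟩
  have hx : (c * s) • x = n • algebraMap R K c := by
    simp only [Algebra.smul_def, map_mul, ← hs]
    ring
  exact hx ▸ Submodule.smul_mem _ n hc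

theorem mem_of_forall_algebraMap_mem_localSpan (ha : a ≠ 0) {x : K}
    (h : ∀ v : HeightOneSpectrum R, algebraMap K (v.adicCompletion K) x ∈ localSpan R K a v) :
    x ∈ (a : Submodule R K) := by
  suffices x ∈ a⁻¹⁻¹ by rwa [inv_inv] at this
  rw [FractionalIdeal.mem_inv_iff (inv_ne_zero ha)]
  intro y hy
  rw [FractionalIdeal.mem_one_iff]
  refine mem_integers_of_valuation_le_one K _ fun v => ?_
  obtain ⟨b, hb, hxb⟩ := algebraMap_mem_localSpan_iff.1 (h v)
  have hby : b * y ∈ (1 : FractionalIdeal (nonZeroDivisors R) K) :=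
    mul_inv_cancel₀ ha ▸ FractionalIdeal.mul_mem_mul hb hy
  obtain ⟨r, hr⟩ := (FractionalIdeal.mem_one_iff _).1 hby
  calc v.valuation K (x * y) = v.valuation K x * v.valuation K y := map_mul _ _ _
    _ ≤ v.valuation K b * v.valuation K y := mul_le_mul_left hxb _
    _ = v.valuation K (algebraMap R K r) := by rw [hr, map_mul]
    _ ≤ 1 := v.valuation_le_one r

theorem finite_setOf_algebraMap_notMem_localSpan (ha : a ≠ 0) (x : K) :
    {v : HeightOneSpectrum R | algebraMap K (v.adicCompletion K) x ∉ localSpan R K a v}.Finite := by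
  obtain ⟨b, hb, hb0⟩ := Submodule.exists_mem_ne_zero_of_ne_bot
    (FractionalIdeal.coeToSubmodule_ne_bot.2 ha)
  refine (Support.finite R (x / b)).subset fun v hv => ?_
  by_contra hle
  refine hv (algebraMap_mem_localSpan_iff.2 ⟨b, hb, ?_⟩)
  calc v.valuation K x = v.valuation K (x / b) * v.valuation K b := by
        rw [← map_mul, div_mul_cancel₀ x hb0]
    _ ≤ 1 * v.valuation K b := mul_le_mul_left (not_lt.1 hle) _
    _ = v.valuation K b := one_mul _

theorem isOpen_localSpan (ha : a ≠ 0) :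
    IsOpen (localSpan R K a v : Set (v.adicCompletion K)) := by
  obtain ⟨b, hb, hb0⟩ := Submodule.exists_mem_ne_zero_of_ne_bot
    (FractionalIdeal.coeToSubmodule_ne_bot.2 ha)
  set β := algebraMap K (v.adicCompletion K) b
  have hβ : β ≠ 0 := by simpa [β] using hb0
  refine (localSpan R K a v).toAddSubgroup.isOpen_of_mem_nhds (g := 0) ?_
  have hball : (fun z => z * β⁻¹) ⁻¹' (v.adicCompletionIntegers K : Set (v.adicCompletion K)) ∈
      𝓝 (0 : v.adicCompletion K) :=
    (continuous_mul_const _).continuousAt.preimage_mem_nhds (by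
      rw [zero_mul]; exact (Valued.isOpen_valuationSubring _).mem_nhds (zero_mem _))
  refine Filter.mem_of_superset hball fun z hz => mem_localSpan_iff.2 ⟨b, hb, ?_⟩
  rw [Set.mem_preimage, SetLike.mem_coe, mem_adicCompletionIntegers, map_mul, map_inv₀,
    mul_inv_le_iff₀ (zero_lt_iff.2 (by simpa using hβ)), one_mul,
    valued_algebraMap_adicCompletion] at hz
  exact hz

theorem exists_algebraMap_sub_mem_localSpan (ha : a ≠ 0) (y : v.adicCompletion K) :
    ∃ x : K, algebraMap K (v.adicCompletion K) x - y ∈ localSpan R K a v :=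
  (denseRange_algebraMap K v).exists_mem_open
    ((isOpen_localSpan ha).preimage (continuous_sub_right y)) ⟨y, by simp⟩

theorem algebraMap_mul_mem_localSpan {t r : R} {x : K} (hrx : r • x ∈ (a : Submodule R K))
    (htr : v.intValuation t ≤ v.intValuation r) :
    algebraMap K (v.adicCompletion K) (algebraMap R K t * x) ∈ localSpan R K a v := by
  refine algebraMap_mem_localSpan_iff.2 ⟨r • x, hrx, ?_⟩
  rw [Algebra.smul_def, map_mul, map_mul, valuation_of_algebraMap, valuation_of_algebraMap]
  exact mul_le_mul_left htr _

theorem exists_algebraMap_sub_mem_localSpan_and_forall_ne (ha : a ≠ 0)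
    (y : v.adicCompletion K) :
    ∃ x : K, algebraMap K (v.adicCompletion K) x - y ∈ localSpan R K a v ∧
      ∀ w ≠ v, algebraMap K (w.adicCompletion K) x ∈ localSpan R K a w := by
  classical
  obtain ⟨x₀, hx₀⟩ := exists_algebraMap_sub_mem_localSpan ha y
  obtain ⟨r, hr, hrx⟩ := FractionalIdeal.exists_ne_zero_smul_mem ha x₀
  obtain ⟨t, ht⟩ := exists_forall_intValuation_sub_le hr fun w => if w = v then 1 else 0
  refine ⟨algebraMap R K t * x₀, ?_, fun w hw => ?_⟩
  · have hv := algebraMap_mul_mem_localSpan hrx (by simpa using ht v)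
    convert add_mem hv hx₀ using 1
    simp only [map_sub, map_one, sub_mul, one_mul, map_mul]
    ring
  · exact algebraMap_mul_mem_localSpan hrx (by simpa [hw] using ht w)

variable (a v) in
noncomputable def toLocalQuotient : K →ₗ[R] v.adicCompletion K ⧸ localSpan R K a v :=
  ((localSpan R K a v).mkQ.restrictScalars R).comp
    ((Algebra.linearMap K (v.adicCompletion K)).restrictScalars R)

noncomputable def toSumLocalQuotients (ha : a ≠ 0) :
    K →ₗ[R] ⨁ v : HeightOneSpectrum R, (v.adicCompletion K ⧸ localSpan R K a v) :=
  DirectSum.linearMapOfFinite (toLocalQuotient a) fun x => by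
    simpa [toLocalQuotient, Submodule.Quotient.mk_eq_zero] using
      finite_setOf_algebraMap_notMem_localSpan ha x

@[simp]
theorem toSumLocalQuotients_apply (ha : a ≠ 0) (x : K) (v : HeightOneSpectrum R) :
    toSumLocalQuotients ha x v = Submodule.Quotient.mk (algebraMap K (v.adicCompletion K) x) :=
  rfl

theorem ker_toSumLocalQuotients (ha : a ≠ 0) :
    LinearMap.ker (toSumLocalQuotients ha) = (a : Submodule R K) := by
  ext x
  refine ⟨fun hx => mem_of_forall_algebraMap_mem_localSpan ha fun v => ?_, fun hx => ?_⟩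
  · exact (Submodule.Quotient.mk_eq_zero _).1 (DFinsupp.ext_iff.1 hx v)
  · exact DFinsupp.ext fun v =>
      (Submodule.Quotient.mk_eq_zero _).2 (Submodule.subset_span ⟨x, hx, rfl⟩)

theorem surjective_toSumLocalQuotients (ha : a ≠ 0) :
    Function.Surjective (toSumLocalQuotients ha) := by
  classical
  refine DirectSum.surjective_of_forall_exists_eq_of _ fun v q => ?_
  obtain ⟨y, rfl⟩ := Submodule.Quotient.mk_surjective _ q
  obtain ⟨x, hxv, hxw⟩ := exists_algebraMap_sub_mem_localSpan_and_forall_ne ha y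
  refine ⟨x, DFinsupp.ext fun w => ?_⟩
  rw [toSumLocalQuotients_apply]
  by_cases hw : w = v
  · subst hw
    rw [DirectSum.of_eq_same, Submodule.Quotient.eq]
    exact hxv
  · rw [DirectSum.of_eq_of_ne _ _ _ hw, Submodule.Quotient.mk_eq_zero]
    exact hxw w hw

end LocalSpan

theorem stmt8
    (a : FractionalIdeal (nonZeroDivisors R) K) (ha : a ≠ 0) :
    ∃ Φ : K →ₗ[R] ⨁ v : HeightOneSpectrum R,
        (v.adicCompletion K ⧸ localSpan R K a v),
      (∀ (x : K) (v : HeightOneSpectrum R),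
          Φ x v = Submodule.Quotient.mk (algebraMap K (v.adicCompletion K) x)) ∧
      Function.Surjective Φ ∧
      LinearMap.ker Φ = (a : Submodule R K) ∧
      Nonempty ((K ⧸ (a : Submodule R K)) ≃ₗ[R]
        (⨁ v : HeightOneSpectrum R, (v.adicCompletion K ⧸ localSpan R K a v))) := by
  refine ⟨toSumLocalQuotients ha, toSumLocalQuotients_apply ha, surjective_toSumLocalQuotients ha,
    ker_toSumLocalQuotients ha, ?_⟩
  -- without this local instance, unifying the two additive structures on the direct sum times out
  let _ : AddCommGroup (⨁ v : HeightOneSpectrum R, (v.adicCompletion K ⧸ localSpan R K a v)) :=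
    inferInstance
  exact ⟨(Submodule.quotEquivOfEq _ _ (ker_toSumLocalQuotients ha).symm).trans
    ((toSumLocalQuotients ha).quotKerEquivOfSurjective (surjective_toSumLocalQuotients ha))⟩
end
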